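/- arXiv:1011.6082 — 4 statements merged into one kernel-verified Lean document; each statement's English description precedes it below -/
import Mathlib

section
/- Let B ∈ {-1,1}^t, let (R^0 = B, R^1, …, R^t = -B) be a sequence of sign vectors with R^{k-1}, R^k differing in exactly one coordinate l_k and l_1,…,l_t a permutation of {1,…,t}, and let M be the matrix with rows R^0,…,R^{t-1}. Then for every T ∈ {-1,1}^t, the coordinate vector x := T·M^{-1} satisfies x ∈ {-1,0,1}^t. -/
/-!
Coordinate `j` flips exactly once along the path, at step `σ j` with `σ = l⁻¹`, so the rows of
`M` are `R k j = ± R 0 j` according as `k ≤ σ j`: `M` is the staircase matrix `S`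
(`S k m = 1` for `k ≤ m`, `-1` otherwise) with columns permuted by `σ` and scaled by the signs
`R 0 j`. For `y = x S` one has `y (m + 1) - y m = 2 x (m + 1)` and `y 0 + y (t - 1) = 2 x 0`, so
`S` is invertible and, when `y` is a sign vector, each `x k` is half a sum of two signs.
-/

open Finset Matrix

lemma half_add_sign {a b : ℝ} (ha : a = -1 ∨ a = 1) (hb : b = -1 ∨ b = 1) :
    (a + b) / 2 = -1 ∨ (a + b) / 2 = 0 ∨ (a + b) / 2 = 1 := by
  rcases ha with rfl | rfl <;> rcases hb with rfl | rfl <;> norm_num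

lemma eq_neg_of_sign_ne {a b : ℝ} (ha : a = -1 ∨ a = 1) (hb : b = -1 ∨ b = 1) (hab : a ≠ b) :
    b = -a := by
  rcases ha with rfl | rfl <;> rcases hb with rfl | rfl <;> norm_num at *

lemma sign_of_mul_sign {a b : ℝ} (hab : a * b = -1 ∨ a * b = 1) (hb : b = -1 ∨ b = 1) :
    a = -1 ∨ a = 1 := by
  rcases hb with rfl | rfl <;> rcases hab with h | h <;> [right; left; left; right] <;> linarith

def staircase (n : ℕ) : Matrix (Fin (n + 1)) (Fin (n + 1)) ℝ :=
  of fun k m => if k ≤ m then 1 else -1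

noncomputable def staircaseSolve {n : ℕ} (z : Fin (n + 1) → ℝ) : Fin (n + 1) → ℝ :=
  Fin.cons ((z 0 + z (Fin.last n)) / 2) fun m => (z m.succ - z m.castSucc) / 2

section Staircase

variable {n : ℕ}

lemma staircase_zero_add_last (k : Fin (n + 1)) :
    staircase n k 0 + staircase n k (Fin.last n) = if k = 0 then 2 else 0 := by
  simp only [staircase, of_apply, Fin.le_last, if_true, Fin.le_zero_iff]
  split_ifs <;> norm_num

lemma staircase_succ_sub_castSucc (k : Fin (n + 1)) (m : Fin n) :
    staircase n k m.succ - staircase n k m.castSucc = if k = m.succ then 2 else 0 := by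
  simp only [staircase, of_apply, Fin.le_def, Fin.ext_iff, Fin.val_succ, Fin.val_castSucc]
  split_ifs <;> first | omega | norm_num

lemma vecMul_staircase_zero_add_last (x : Fin (n + 1) → ℝ) :
    (x ᵥ* staircase n) 0 + (x ᵥ* staircase n) (Fin.last n) = 2 * x 0 := by
  simp only [vecMul, dotProduct, ← sum_add_distrib, ← mul_add, staircase_zero_add_last,
    mul_ite, mul_zero, sum_ite_eq', mem_univ, if_true, mul_comm]

lemma vecMul_staircase_succ_sub_castSucc (x : Fin (n + 1) → ℝ) (m : Fin n) :
    (x ᵥ* staircase n) m.succ - (x ᵥ* staircase n) m.castSucc = 2 * x m.succ := by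
  simp only [vecMul, dotProduct, ← sum_sub_distrib, ← mul_sub, staircase_succ_sub_castSucc,
    mul_ite, mul_zero, sum_ite_eq', mem_univ, if_true, mul_comm]

lemma staircaseSolve_vecMul (x : Fin (n + 1) → ℝ) : staircaseSolve (x ᵥ* staircase n) = x := by
  ext k
  induction k using Fin.cases with
  | zero => simp [staircaseSolve, vecMul_staircase_zero_add_last]
  | succ m => simp [staircaseSolve, vecMul_staircase_succ_sub_castSucc]

lemma isUnit_staircase : IsUnit (staircase n) :=
  vecMul_injective_iff_isUnit.mp (Function.LeftInverse.injective staircaseSolve_vecMul)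

lemma staircaseSolve_sign {z : Fin (n + 1) → ℝ} (hz : ∀ m, z m = -1 ∨ z m = 1) (k : Fin (n + 1)) :
    staircaseSolve z k = -1 ∨ staircaseSolve z k = 0 ∨ staircaseSolve z k = 1 := by
  induction k using Fin.cases with
  | zero => exact half_add_sign (hz 0) (hz _)
  | succ m =>
    rw [staircaseSolve, Fin.cons_succ, sub_eq_add_neg]
    have hneg : -z m.castSucc = -1 ∨ -z m.castSucc = 1 := by
      rcases hz m.castSucc with h | h <;> simp [h]
    exact half_add_sign (hz _) hneg

end Staircase

lemma signPath_apply {t : ℕ} (R : Fin (t + 1) → Fin t → ℝ)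
    (hsign : ∀ k j, R k j = -1 ∨ R k j = 1) (e : Fin t ≃ Fin t)
    (hstep : ∀ k j, R k.castSucc j ≠ R k.succ j ↔ j = e k) (i : Fin (t + 1)) (j : Fin t) :
    R i j = if i ≤ (e.symm j).castSucc then R 0 j else -R 0 j := by
  induction i using Fin.induction with
  | zero => simp
  | succ k ih =>
    by_cases hj : j = e k
    · have hflip := eq_neg_of_sign_ne (hsign _ j) (hsign _ j) ((hstep k j).mpr hj)
      subst hj
      rw [hflip, ih, e.symm_apply_apply, if_pos le_rfl,
        if_neg (Fin.castSucc_lt_succ (i := k)).not_ge]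
    · have hkeep : R k.castSucc j = R k.succ j := not_not.mp (mt (hstep k j).mp hj)
      have hk : e.symm j ≠ k := fun h => hj (by rw [← h, e.apply_symm_apply])
      rw [← hkeep, ih]
      refine if_congr ?_ rfl rfl
      simp only [Fin.le_def, Fin.val_succ, Fin.val_castSucc]
      have := Fin.val_ne_of_ne hk
      omega

theorem stmt_4_general (t : ℕ)
    (R : Fin (t + 1) → Fin t → ℝ)
    (hsign : ∀ k j, R k j = -1 ∨ R k j = 1)
    (l : Fin t → Fin t) (hl : Function.Bijective l)
    (hstep : ∀ (k : Fin t) (j : Fin t), R k.castSucc j ≠ R k.succ j ↔ j = l k)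
    (T : Fin t → ℝ) (hT : ∀ j, T j = -1 ∨ T j = 1) :
    ∀ i : Fin t,
      Matrix.vecMul T (Matrix.of fun i j : Fin t => R i.castSucc j)⁻¹ i = -1 ∨
      Matrix.vecMul T (Matrix.of fun i j : Fin t => R i.castSucc j)⁻¹ i = 0 ∨
      Matrix.vecMul T (Matrix.of fun i j : Fin t => R i.castSucc j)⁻¹ i = 1 := by
  cases t with
  | zero => exact fun i => i.elim0
  | succ n =>
  set e := Equiv.ofBijective l hl
  set M : Matrix (Fin (n + 1)) (Fin (n + 1)) ℝ := of fun i j => R i.castSucc j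
  have hM : M = (staircase n).submatrix id e.symm * diagonal (R 0) := by
    ext k j
    rw [mul_diagonal, submatrix_apply, show M k j = R k.castSucc j from rfl,
      signPath_apply R hsign e hstep]
    simp only [staircase, of_apply, id, Fin.castSucc_le_castSucc_iff, ite_mul, one_mul,
      neg_one_mul]
  have hMunit : IsUnit M := by
    rw [hM]
    refine ((isUnit_submatrix_equiv (Equiv.refl _) e.symm).2 isUnit_staircase).mul ?_
    exact isUnit_diagonal.2 (Pi.isUnit_iff.2 fun j => isUnit_iff_ne_zero.2 (by
      rcases hsign 0 j with h | h <;> simp [h]))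
  set x := T ᵥ* M⁻¹
  have hx : x ᵥ* M = T := by
    rw [vecMul_vecMul, nonsing_inv_mul _ ((isUnit_iff_isUnit_det M).mp hMunit), vecMul_one]
  have hz : ∀ m, (x ᵥ* staircase n) m = -1 ∨ (x ᵥ* staircase n) m = 1 := by
    intro m
    have hTm : (x ᵥ* staircase n) m * R 0 (e m) = T (e m) := by
      rw [← hx, hM, ← vecMul_vecMul, vecMul_diagonal]
      simp [vecMul, dotProduct]
    exact sign_of_mul_sign (hTm ▸ hT (e m)) (hsign 0 (e m))
  intro i
  rw [← staircaseSolve_vecMul x]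
  exact staircaseSolve_sign hz i

theorem stmt_4 (t : ℕ) (ht : 0 < t)
    (B : Fin t → ℝ) (hB : ∀ j, B j = -1 ∨ B j = 1)
    (R : Fin (t + 1) → Fin t → ℝ)
    (hsign : ∀ k j, R k j = -1 ∨ R k j = 1)
    (hR0 : R 0 = B) (hRt : R (Fin.last t) = -B)
    (l : Fin t → Fin t) (hl : Function.Bijective l)
    (hstep : ∀ (k : Fin t) (j : Fin t), R k.castSucc j ≠ R k.succ j ↔ j = l k)
    (T : Fin t → ℝ) (hT : ∀ j, T j = -1 ∨ T j = 1) :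
    ∀ i : Fin t,
      Matrix.vecMul T (Matrix.of fun i j : Fin t => R i.castSucc j)⁻¹ i = -1 ∨
      Matrix.vecMul T (Matrix.of fun i j : Fin t => R i.castSucc j)⁻¹ i = 0 ∨
      Matrix.vecMul T (Matrix.of fun i j : Fin t => R i.castSucc j)⁻¹ i = 1 :=
  stmt_4_general t R hsign l hl hstep T hT
end

section
/- With the notation above, the subset Q(T,R) ⊆ V(R) with T = Σ_{Q ∈ Q(T,R)} Q is the unique inclusion-minimal subset of V(R) whose elements sum to T: if S ⊆ V(R) satisfies Σ_{Q ∈ S} Q = T, then Q(T,R) ⊆ S. -/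
/-! In coordinate `l m` the vector `R k` is `R 0` for `k ≤ m` and `-R 0` afterwards, so up to
nonzero column scalings and a column permutation the rows `R 0, …, R (t - 1)` form the staircase
sign matrix `(if i ≤ m then 1 else -1)`, which is nonsingular. Hence `x` is the unique coefficient
vector with `∑ xᵢ • R i = T`. A subset `S ⊆ V` summing to `T` gives the coefficients
`cᵢ = [R i ∈ S] - [-R i ∈ S]` with the same property, so `c = x`, and `xᵢ ≠ 0` forces
`xᵢ • R i ∈ S`. -/

open Finset Matrix

section SignPath

variable {K : Type*} [Field K]

theorem eq_zero_of_sum_mul_sign_eq_zero [NeZero (2 : K)] {t : ℕ} {c : Fin t → K}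
    (h : ∀ m : Fin t, ∑ i, c i * (if i ≤ m then 1 else -1) = 0) : c = 0 := by
  funext m
  -- Columns `m` and `m - 1` (or `0` and `t - 1` when `m = 0`) combine to twice a unit vector.
  obtain ⟨m', s, hcol⟩ : ∃ (m' : Fin t) (s : K), ∀ i : Fin t,
      (if i ≤ m then 1 else -1) + s * (if i ≤ m' then 1 else -1) = if i = m then 2 else 0 := by
    rcases Nat.eq_zero_or_eq_succ_pred (m : ℕ) with hm | hm
    · refine ⟨⟨t - 1, by omega⟩, 1, fun i => ?_⟩
      simp only [Fin.le_def, Fin.ext_iff, hm]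
      split_ifs <;> first | (exfalso; omega) | norm_num
    · refine ⟨⟨(m : ℕ) - 1, by omega⟩, -1, fun i => ?_⟩
      simp only [Fin.le_def, Fin.ext_iff]
      split_ifs <;> first | (exfalso; omega) | norm_num
  have h2 : 2 * c m = 0 := by
    calc 2 * c m = ∑ i, c i * (if i = m then 2 else 0) := by simp [mul_comm]
      _ = ∑ i, c i * (if i ≤ m then 1 else -1) + s * ∑ i, c i * (if i ≤ m' then 1 else -1) := by
        simp only [← hcol, mul_add, sum_add_distrib, mul_sum]
        congr 1; refine sum_congr rfl fun i _ => by ring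
      _ = 0 := by rw [h m, h m', mul_zero, add_zero]
  exact (mul_eq_zero.1 h2).resolve_left two_ne_zero

theorem signPath_apply_eq_ite {t : ℕ} {R : Fin (t + 1) → Fin t → K}
    (hsign : ∀ k j, R k j = -1 ∨ R k j = 1) {l : Fin t → Fin t} (hl : Function.Injective l)
    (hstep : ∀ k j, R k.castSucc j ≠ R k.succ j ↔ j = l k) (k : Fin (t + 1)) (m : Fin t) :
    R k (l m) = if (k : ℕ) ≤ m then R 0 (l m) else -R 0 (l m) := by
  induction k using Fin.induction with
  | zero => simp
  | succ k ih =>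
    by_cases hkm : k = m
    · subst hkm
      have hne := (hstep k (l k)).2 rfl
      have hflip : R k.succ (l k) = -R k.castSucc (l k) := by
        rcases hsign k.castSucc (l k) with h | h <;> rcases hsign k.succ (l k) with h' | h' <;>
          rw [h, h'] at hne ⊢ <;> simp at hne ⊢
      rw [hflip, ih]
      simp
    · have hsame : R k.castSucc (l m) = R k.succ (l m) := by
        by_contra hne
        exact hkm (hl ((hstep k (l m)).1 hne)).symm
      rw [← hsame, ih]
      have hmk : (m : ℕ) ≠ k := fun h => hkm (Fin.ext h).symm
      simp only [Fin.val_castSucc, Fin.val_succ]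
      split_ifs <;> first | rfl | omega

theorem linearIndependent_signPath [NeZero (2 : K)] {t : ℕ} {R : Fin (t + 1) → Fin t → K}
    (hsign : ∀ k j, R k j = -1 ∨ R k j = 1) {l : Fin t → Fin t} (hl : Function.Injective l)
    (hstep : ∀ k j, R k.castSucc j ≠ R k.succ j ↔ j = l k) :
    LinearIndependent K fun k : Fin t => R k.castSucc := by
  rw [Fintype.linearIndependent_iff]
  intro c hc
  refine congrFun (eq_zero_of_sum_mul_sign_eq_zero fun m => ?_)
  have hR0 : R 0 (l m) ≠ 0 := by rcases hsign 0 (l m) with h | h <;> simp [h]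
  have hcol : R 0 (l m) * ∑ i, c i * (if i ≤ m then 1 else -1) = 0 :=
    calc R 0 (l m) * ∑ i, c i * (if i ≤ m then 1 else -1)
        = ∑ i, c i * R i.castSucc (l m) := by
          rw [mul_sum]
          refine sum_congr rfl fun i _ => ?_
          rw [signPath_apply_eq_ite hsign hl hstep i.castSucc, Fin.val_castSucc]
          simp only [Fin.le_def]
          split_ifs <;> ring
      _ = 0 := by simpa using congrFun hc (l m)
  exact (mul_eq_zero.1 hcol).resolve_left hR0

end SignPath

theorem Matrix.vecMul_inv_vecMul_of_linearIndependent {n K : Type*} [Fintype n] [DecidableEq n]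
    [Field K] {M : Matrix n n K} (hM : LinearIndependent K M.row) (T : n → K) :
    (T ᵥ* M⁻¹) ᵥ* M = T := by
  have hdet : IsUnit M.det := (isUnit_iff_isUnit_det M).1 (linearIndependent_rows_iff_isUnit.1 hM)
  rw [vecMul_vecMul, nonsing_inv_mul M hdet, vecMul_one]

section SignedCombination

variable {K ι E : Type*} [Field K] [AddCommGroup E] [Module K E] {v : ι → E}

theorem LinearIndependent.ne_neg [NeZero (2 : K)] (hv : LinearIndependent K v) (i j : ι) :
    v i ≠ -v j := by
  intro h
  obtain rfl : i = j := hv.eq_of_smul_apply_eq_smul_apply 1 (-1) i j one_ne_zero (by simpa using h)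
  have h2 : (2 : K) • v i = 0 := by rw [two_smul, ← eq_neg_iff_add_eq_zero, ← h]
  exact hv.ne_zero i ((smul_eq_zero.1 h2).resolve_left two_ne_zero)

variable [Fintype ι] [DecidableEq E]

theorem sum_eq_sum_signedIndicator_smul {S : Finset E} (hinj : Function.Injective v)
    (hdisj : ∀ i j, v i ≠ -v j) (hS : S ⊆ univ.image v ∪ univ.image fun i => -v i) :
    ∑ q ∈ S, q = ∑ i, ((if v i ∈ S then 1 else 0) - (if -v i ∈ S then 1 else 0) : K) • v i := by
  have hdisjoint : Disjoint (univ.image v) (univ.image fun i => -v i) := by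
    refine disjoint_left.2 fun q hq hq' => ?_
    obtain ⟨i, -, rfl⟩ := mem_image.1 hq
    obtain ⟨j, -, hj⟩ := mem_image.1 hq'
    exact hdisj i j hj.symm
  calc ∑ q ∈ S, q
      = ∑ q ∈ univ.image v ∪ univ.image fun i => -v i, if q ∈ S then q else 0 := by
        rw [sum_ite_mem, inter_eq_right.2 hS]
    _ = ∑ i, (if v i ∈ S then v i else 0) + ∑ i, (if -v i ∈ S then -v i else 0) := by
        rw [sum_union hdisjoint, sum_image hinj.injOn,
          sum_image fun i _ j _ h => hinj (neg_inj.1 h)]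
    _ = _ := by
        rw [← sum_add_distrib]
        refine sum_congr rfl fun i _ => ?_
        split_ifs <;> simp

theorem LinearIndependent.sum_image_smul [DecidableEq K] (hv : LinearIndependent K v) (x : ι → K) :
    ∑ q ∈ (univ.filter fun i => x i ≠ 0).image (fun i => x i • v i), q = ∑ i, x i • v i := by
  rw [sum_image fun i hi j _ h => hv.eq_of_smul_apply_eq_smul_apply _ _ i j (mem_filter.1 hi).2 h]
  exact sum_filter_of_ne fun i _ hi => left_ne_zero_of_smul hi

theorem LinearIndependent.image_smul_subset_of_sum_eq [NeZero (2 : K)] [DecidableEq K]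
    (hv : LinearIndependent K v) {x : ι → K} {S : Finset E} (hS : S ⊆ univ.image v ∪ univ.image fun i => -v i)
    (hsum : ∑ q ∈ S, q = ∑ i, x i • v i) :
    (univ.filter fun i => x i ≠ 0).image (fun i => x i • v i) ⊆ S := by
  set c : ι → K := fun i => (if v i ∈ S then 1 else 0) - (if -v i ∈ S then 1 else 0)
  have hc : ∑ q ∈ S, q = ∑ i, c i • v i :=
    sum_eq_sum_signedIndicator_smul hv.injective hv.ne_neg hS
  have hcx : ∀ i, c i = x i := by
    have hdiff := Fintype.linearIndependent_iff.1 hv (c - x) (by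
      simp only [Pi.sub_apply, sub_smul, sum_sub_distrib]
      rw [← hc, hsum, sub_self])
    exact fun i => sub_eq_zero.1 (hdiff i)
  intro q hq
  obtain ⟨i, hxi, rfl⟩ := mem_image.1 hq
  have hi : c i ≠ 0 := (hcx i).symm ▸ (mem_filter.1 hxi).2
  rw [← hcx i]
  by_cases hpos : v i ∈ S <;> by_cases hneg : -v i ∈ S <;> simp [c, hpos, hneg] at hi ⊢

end SignedCombination

theorem stmt_6_general (t : ℕ)
    (R : Fin (t + 1) → Fin t → ℝ)
    (hsign : ∀ k j, R k j = -1 ∨ R k j = 1)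
    (l : Fin t → Fin t) (hl : Function.Bijective l)
    (hstep : ∀ (k : Fin t) (j : Fin t), R k.castSucc j ≠ R k.succ j ↔ j = l k)
    (T : Fin t → ℝ)
    (x : Fin t → ℝ)
    (hx : x = Matrix.vecMul T (Matrix.of fun i j : Fin t => R i.castSucc j)⁻¹)
    (V Q : Finset (Fin t → ℝ))
    (hV : V = (Finset.univ.image fun k : Fin t => R k.castSucc)
        ∪ (Finset.univ.image fun k : Fin t => -(R k.castSucc)))
    (hQ : Q = (Finset.univ.filter fun i : Fin t => x i ≠ 0).image
        fun i => x i • R i.castSucc) :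
    ∑ q ∈ Q, q = T ∧
    ∀ S : Finset (Fin t → ℝ), S ⊆ V → (∑ q ∈ S, q) = T → Q ⊆ S := by
  have hli : LinearIndependent ℝ fun k : Fin t => R k.castSucc :=
    linearIndependent_signPath hsign hl.injective hstep
  have hxT : ∑ i, x i • R i.castSucc = T := by
    have := vecMul_inv_vecMul_of_linearIndependent (M := of fun i j : Fin t => R i.castSucc j) hli T
    rwa [← hx, vecMul_eq_sum] at this
  subst hV hQ
  exact ⟨hxT ▸ hli.sum_image_smul x,
    fun S hS hST => hli.image_smul_subset_of_sum_eq hS (hST.trans hxT.symm)⟩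

theorem stmt_6 (t : ℕ) (ht : 0 < t)
    (B : Fin t → ℝ) (hB : ∀ j, B j = -1 ∨ B j = 1)
    (R : Fin (t + 1) → Fin t → ℝ)
    (hsign : ∀ k j, R k j = -1 ∨ R k j = 1)
    (hR0 : R 0 = B) (hRt : R (Fin.last t) = -B)
    (l : Fin t → Fin t) (hl : Function.Bijective l)
    (hstep : ∀ (k : Fin t) (j : Fin t), R k.castSucc j ≠ R k.succ j ↔ j = l k)
    (T : Fin t → ℝ) (hT : ∀ j, T j = -1 ∨ T j = 1)
    (x : Fin t → ℝ)
    (hx : x = Matrix.vecMul T (Matrix.of fun i j : Fin t => R i.castSucc j)⁻¹)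
    (V Q : Finset (Fin t → ℝ))
    (hV : V = (Finset.univ.image fun k : Fin t => R k.castSucc)
        ∪ (Finset.univ.image fun k : Fin t => -(R k.castSucc)))
    (hQ : Q = (Finset.univ.filter fun i : Fin t => x i ≠ 0).image
        fun i => x i • R i.castSucc) :
    ∑ q ∈ Q, q = T ∧
    ∀ S : Finset (Fin t → ℝ), S ⊆ V → (∑ q ∈ S, q) = T → Q ⊆ S :=
  stmt_6_general t R hsign l hl hstep T x hx V Q hV hQ
end

section
/- Let V(R) be the vertex set of a symmetric cycle as above, and let B ∈ {-1,1}^t be arbitrary. Order V(R) by T' ⪯_B T'' iff S(B,T') ⊆ S(B,T''). Then the set min_B V(R) of minimal elements of (V(R), ⪯_B) equals Q(B,R), so B = Σ_{Q ∈ min_B V(R)} Q. -/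
/-!
Index the vertices of the cycle by `ℤ/2t`, position `u` standing for the vertex reached by step
`u`. The vertices that disagree with `B` in a fixed coordinate form a half-circle `[s, s + t)`,
and the starts `s` of these half-circles contain exactly one point of every antipodal pair
`{p, p + t}`; call `g` the indicator of the starts. Comparing the sets `S(B, ·)` of two vertices
then means comparing the half-circles that contain them, and the minimal vertices are the ascents
of `g` (positions `i` with `¬ g i` and `g (i + 1)`), the local minima of `|S(B, ·)|`.

A set `P` of vertices sums to `B` iff every half-circle contains exactly `(|P| - 1)/2` of them.
For the ascents this follows by telescoping `g` along a half-circle, since a shift by `t`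
exchanges ascents and descents. Conversely, if an ascent `i` is missing from `P`, the two
half-circles avoiding `i` cover `P`, so they cannot both contain only `(|P| - 1)/2` of its points.
-/

open Finset

def ascents (g : ℕ → Prop) [DecidablePred g] (a b : ℕ) : Finset ℕ :=
  (Ico a b).filter fun i => ¬ g i ∧ g (i + 1)

section Ascents

variable {g : ℕ → Prop} {t : ℕ}

theorem mem_ascents [DecidablePred g] {a b i : ℕ} :
    i ∈ ascents g a b ↔ (a ≤ i ∧ i < b) ∧ ¬ g i ∧ g (i + 1) := by
  rw [ascents, mem_filter, mem_Ico]

theorem card_ascents_sub_card_ascents_not [DecidablePred g] {a b : ℕ} (hab : a ≤ b) :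
    (#(ascents g a b) : ℤ) - #(ascents (fun i => ¬ g i) a b)
      = (if g b then 1 else 0) - (if g a then 1 else 0) := by
  rw [ascents, ascents, natCast_card_filter, natCast_card_filter, ← sum_sub_distrib,
    ← sum_Ico_sub (fun i => if g i then (1 : ℤ) else 0) hab]
  refine sum_congr rfl fun i _ => ?_
  by_cases g i <;> by_cases g (i + 1) <;> simp [*]

theorem card_ascents_add [DecidablePred g] {a b c : ℕ} (hab : a ≤ b) (hbc : b ≤ c) :
    #(ascents g a c) = #(ascents g a b) + #(ascents g b c) := by
  rw [ascents, ← Ico_union_Ico_eq_Ico hab hbc, filter_union, card_union_of_disjoint]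
  · rfl
  · exact disjoint_filter_filter (Ico_disjoint_Ico_consecutive a b c)

theorem iff_of_add_two_mul (hg : ∀ u, g (u + t) ↔ ¬ g u) (u : ℕ) : g (u + 2 * t) ↔ g u := by
  rw [two_mul, ← add_assoc, hg, hg, not_not]

theorem card_ascents_add_right [DecidablePred g] (hg : ∀ u, g (u + t) ↔ ¬ g u) (a b : ℕ) :
    #(ascents g (a + t) (b + t)) = #(ascents (fun i => ¬ g i) a b) := by
  rw [ascents, ← map_add_right_Ico, filter_map, card_map]
  congr 1
  refine filter_congr fun i _ => ?_
  simp only [Function.comp_apply, addRightEmbedding_apply, add_right_comm i t 1, hg]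

theorem card_ascents_add_two_mul [DecidablePred g] (hg : ∀ u, g (u + t) ↔ ¬ g u) (a : ℕ) :
    #(ascents g a (a + 2 * t)) = #(ascents g 0 (2 * t)) := by
  have hp : Function.Periodic (fun i => ¬ g i ∧ g (i + 1)) (2 * t) := fun i => by
    simp only [add_right_comm i (2 * t) 1, iff_of_add_two_mul hg]
  have h0 := Nat.filter_Ico_card_eq_of_periodic 0 (2 * t) _ hp
  rw [zero_add] at h0
  rw [ascents, ascents, h0, Nat.filter_Ico_card_eq_of_periodic a (2 * t) _ hp]

theorem two_mul_card_ascents [DecidablePred g] (hg : ∀ u, g (u + t) ↔ ¬ g u) (a : ℕ) :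
    2 * (#(ascents g a (a + t)) : ℤ)
      = #(ascents g 0 (2 * t)) + (if g (a + t) then 1 else 0) - (if g a then 1 else 0) := by
  have htele := card_ascents_sub_card_ascents_not (g := g) (Nat.le_add_right a t)
  have hsplit : #(ascents g a (a + t + t))
      = #(ascents g a (a + t)) + #(ascents g (a + t) (a + t + t)) :=
    card_ascents_add (Nat.le_add_right a t) (Nat.le_add_right _ t)
  rw [card_ascents_add_right hg, add_assoc, ← two_mul, card_ascents_add_two_mul hg] at hsplit
  rw [hsplit]
  push_cast
  linarith

end Ascents

/-- For `s, u < 2 * t`: the point `u` of `ℤ/2t` lies on the half-circle `[s, s + t)`. -/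
def inArc (t s u : ℕ) : Prop := (s ≤ u ∧ u < s + t) ∨ u + t < s

instance (t s u : ℕ) : Decidable (inArc t s u) := inferInstanceAs (Decidable (_ ∨ _))

def antipode (t s : ℕ) : ℕ := if s < t then s + t else s - t

def nextPos (t i : ℕ) : ℕ := if i + 1 = 2 * t then 0 else i + 1

def prevPos (t i : ℕ) : ℕ := if i = 0 then 2 * t - 1 else i - 1

section Arcs

variable {t s i u v : ℕ}

theorem antipode_lt (hs : s < 2 * t) : antipode t s < 2 * t := by
  unfold antipode; split_ifs <;> omega

theorem nextPos_lt (hi : i < 2 * t) : nextPos t i < 2 * t := by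
  unfold nextPos; split_ifs <;> omega

theorem prevPos_lt (hi : i < 2 * t) : prevPos t i < 2 * t := by
  unfold prevPos; split_ifs <;> omega

theorem inArc_iff_mem_Ico (hs : s < t) : inArc t s u ↔ u ∈ Ico s (s + t) := by
  rw [mem_Ico]; unfold inArc; omega

theorem inArc_antipode (hs : s < 2 * t) (hu : u < 2 * t) :
    inArc t (antipode t s) u ↔ ¬ inArc t s u := by
  unfold inArc antipode; split_ifs <;> omega

theorem not_inArc_nextPos_self (hi : i < 2 * t) : ¬ inArc t (nextPos t i) i := by
  unfold inArc nextPos; split_ifs <;> omega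

theorem not_inArc_antipode_self : ¬ inArc t (antipode t i) i := by
  unfold inArc antipode; split_ifs <;> omega

theorem inArc_nextPos_or_inArc_antipode (hi : i < 2 * t) (hv : v < 2 * t) (hne : v ≠ i) :
    inArc t (nextPos t i) v ∨ inArc t (antipode t i) v := by
  unfold inArc nextPos antipode; split_ifs <;> omega

theorem eq_antipode_of_inArc_prevPos (hi : i < 2 * t) (hs : s < 2 * t)
    (hprev : inArc t s (prevPos t i)) (hnot : ¬ inArc t s i) : s = antipode t i := by
  unfold inArc prevPos antipode at *; split_ifs at * <;> omega

theorem eq_nextPos_of_inArc_nextPos (hi : i < 2 * t) (hs : s < 2 * t)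
    (hnext : inArc t s (nextPos t i)) (hnot : ¬ inArc t s i) : s = nextPos t i := by
  unfold inArc nextPos at *; split_ifs at * <;> omega

end Arcs

section Starts

variable {g : ℕ → Prop} {t : ℕ}

theorem antipode_iff (hg : ∀ u, g (u + t) ↔ ¬ g u) {s : ℕ} (hs : s < 2 * t) :
    g (antipode t s) ↔ ¬ g s := by
  unfold antipode
  split_ifs with h
  · exact hg s
  · obtain ⟨r, rfl⟩ : ∃ r, s = r + t := ⟨s - t, by omega⟩
    rw [Nat.add_sub_cancel, hg, not_not]

theorem nextPos_iff (hg : ∀ u, g (u + t) ↔ ¬ g u) (i : ℕ) : g (nextPos t i) ↔ g (i + 1) := by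
  unfold nextPos
  split_ifs with h
  · rw [h, ← zero_add (2 * t), iff_of_add_two_mul hg]
  · rfl

theorem eq_of_forall_inArc_iff (hg : ∀ u, g (u + t) ↔ ¬ g u) {i v : ℕ} (hi : i < 2 * t)
    (hv : v < 2 * t) (h : ∀ s < 2 * t, g s → (inArc t s v ↔ inArc t s i)) : v = i := by
  by_contra hne
  obtain ⟨s, hs, hvs, his⟩ : ∃ s < 2 * t, inArc t s v ∧ ¬ inArc t s i := by
    rcases inArc_nextPos_or_inArc_antipode hi hv hne with h | h
    · exact ⟨_, nextPos_lt hi, h, not_inArc_nextPos_self hi⟩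
    · exact ⟨_, antipode_lt hi, h, not_inArc_antipode_self⟩
  by_cases hgs : g s
  · exact his ((h s hs hgs).1 hvs)
  · have := h (antipode t s) (antipode_lt hs) ((antipode_iff hg hs).2 hgs)
    rw [inArc_antipode hs hv, inArc_antipode hs hi] at this
    exact this.2 his hvs

variable [DecidablePred g]

theorem two_mul_card_filter_inArc_add_one (hg : ∀ u, g (u + t) ↔ ¬ g u) {s : ℕ}
    (hs : s < 2 * t) (hgs : g s) :
    2 * #((ascents g 0 (2 * t)).filter (inArc t s)) + 1 = #(ascents g 0 (2 * t)) := by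
  have hfilter : ∀ r < t, (ascents g 0 (2 * t)).filter (inArc t r) = ascents g r (r + t) := by
    intro r hr
    ext i
    simp only [mem_filter, mem_ascents, inArc_iff_mem_Ico hr, mem_Ico]
    constructor
    · rintro ⟨⟨-, hasc⟩, hmem⟩
      exact ⟨hmem, hasc⟩
    · rintro ⟨⟨h1, h2⟩, hasc⟩
      exact ⟨⟨⟨by omega, by omega⟩, hasc⟩, h1, h2⟩
  by_cases hst : s < t
  · have := two_mul_card_ascents hg s
    rw [if_neg fun h => (hg s).1 h hgs, if_pos hgs] at this
    rw [hfilter s hst]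
    omega
  · obtain ⟨r, rfl⟩ : ∃ r, s = r + t := ⟨s - t, by omega⟩
    have := two_mul_card_ascents hg r
    rw [if_pos hgs, if_neg ((hg r).1 hgs)] at this
    -- the half-circle starting at `r + t` is the complement of the one starting at `r`
    have hcompl : (ascents g 0 (2 * t)).filter (inArc t (r + t))
        = (ascents g 0 (2 * t)).filter fun i => ¬ inArc t r i := by
      refine filter_congr fun i hi => ?_
      have := inArc_antipode (t := t) (show r < 2 * t by omega) (mem_ascents.1 hi).1.2
      rwa [antipode, if_pos (by omega)] at this
    have hsum := card_filter_add_card_filter_not (s := ascents g 0 (2 * t)) (inArc t r)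
    rw [hcompl, hfilter r (by omega)] at *
    omega

theorem eq_of_mem_ascents (hg : ∀ u, g (u + t) ↔ ¬ g u) {i v : ℕ}
    (hi : i ∈ ascents g 0 (2 * t)) (hv : v < 2 * t)
    (hsub : ∀ s < 2 * t, g s → inArc t s v → inArc t s i) : v = i := by
  obtain ⟨⟨-, hi⟩, hgi, hgi1⟩ := mem_ascents.1 hi
  by_contra hne
  rcases inArc_nextPos_or_inArc_antipode hi hv hne with h | h
  · exact not_inArc_nextPos_self hi (hsub _ (nextPos_lt hi) ((nextPos_iff hg i).2 hgi1) h)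
  · exact not_inArc_antipode_self (hsub _ (antipode_lt hi) ((antipode_iff hg hi).2 hgi) h)

theorem exists_ne_of_notMem_ascents (hg : ∀ u, g (u + t) ↔ ¬ g u) {i : ℕ} (hi : i < 2 * t)
    (hasc : i ∉ ascents g 0 (2 * t)) :
    ∃ v < 2 * t, v ≠ i ∧ ∀ s < 2 * t, g s → inArc t s v → inArc t s i := by
  by_cases hgi : g i
  · refine ⟨prevPos t i, prevPos_lt hi, by unfold prevPos; split_ifs <;> omega,
      fun s hs hgs hv => ?_⟩
    by_contra hnot
    rw [eq_antipode_of_inArc_prevPos hi hs hv hnot, antipode_iff hg hi] at hgs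
    exact hgs hgi
  · have hgi1 : ¬ g (i + 1) := fun h => hasc (mem_ascents.2 ⟨⟨Nat.zero_le i, hi⟩, hgi, h⟩)
    refine ⟨nextPos t i, nextPos_lt hi, by unfold nextPos; split_ifs <;> omega,
      fun s hs hgs hv => ?_⟩
    by_contra hnot
    rw [eq_nextPos_of_inArc_nextPos hi hs hv hnot, nextPos_iff hg] at hgs
    exact hgi1 hgs

theorem ascents_subset (hg : ∀ u, g (u + t) ↔ ¬ g u) {P : Finset ℕ} (hP : P ⊆ range (2 * t))
    (hcard : ∀ s < 2 * t, g s → 2 * #(P.filter (inArc t s)) + 1 = #P) :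
    ascents g 0 (2 * t) ⊆ P := by
  intro i hasc
  obtain ⟨⟨-, hi⟩, hgi, hgi1⟩ := mem_ascents.1 hasc
  by_contra hiP
  have hcover : P ⊆ P.filter (inArc t (nextPos t i)) ∪ P.filter (inArc t (antipode t i)) := by
    intro v hv
    rw [← filter_or, mem_filter]
    exact ⟨hv, inArc_nextPos_or_inArc_antipode hi (mem_range.1 (hP hv))
      (ne_of_mem_of_not_mem hv hiP)⟩
  have h1 := hcard _ (nextPos_lt hi) ((nextPos_iff hg i).2 hgi1)
  have h2 := hcard _ (antipode_lt hi) ((antipode_iff hg hi).2 hgi)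
  have := (card_le_card hcover).trans (card_union_le _ _)
  omega

end Starts

theorem sum_ite_neg_eq_iff {ι α : Type*} {B : ι → ℝ} (hB : ∀ j, B j ≠ 0) (A : ι → α → Prop)
    [∀ j, DecidablePred (A j)] (P : Finset α) :
    (∑ u ∈ P, fun j => if A j u then -B j else B j) = B
      ↔ ∀ j, 2 * #(P.filter (A j)) + 1 = #P := by
  rw [funext_iff]
  refine forall_congr' fun j => ?_
  have hcard := card_filter_add_card_filter_not (s := P) (A j)
  rw [Finset.sum_apply, sum_ite, sum_const, sum_const, nsmul_eq_mul, nsmul_eq_mul]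
  constructor
  · intro h
    have : ((#(P.filter fun u => ¬ A j u) : ℝ) - #(P.filter (A j)) - 1) * B j = 0 := by
      linarith
    have := (mul_eq_zero.1 this).resolve_right (hB j)
    have : (#(P.filter fun u => ¬ A j u) : ℝ) = #(P.filter (A j)) + 1 := by linarith
    norm_cast at this
    omega
  · intro h
    rw [show #(P.filter fun u => ¬ A j u) = #(P.filter (A j)) + 1 by omega]
    push_cast
    ring

/-- The vertices of a symmetric cycle, as seen from `B`. -/
structure IsHalfArcFamily {ι : Type*} (t : ℕ) (g : ℕ → Prop) (B : ι → ℝ) (y : ℕ → ι → ℝ)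
    (start : ι → ℕ) : Prop where
  antiperiodic : ∀ u, g (u + t) ↔ ¬ g u
  ne_zero : ∀ j, B j ≠ 0
  start_lt : ∀ j, start j < 2 * t
  start_mem : ∀ j, g (start j)
  exists_start : ∀ s < 2 * t, g s → ∃ j, start j = s
  apply_eq : ∀ u < 2 * t, ∀ j, y u j = if inArc t (start j) u then -B j else B j

namespace IsHalfArcFamily

variable {ι : Type*} {t : ℕ} {g : ℕ → Prop} {B : ι → ℝ} {y : ℕ → ι → ℝ} {start : ι → ℕ}

theorem ne_iff_inArc (h : IsHalfArcFamily t g B y start) {u : ℕ} (hu : u < 2 * t) (j : ι) :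
    B j ≠ y u j ↔ inArc t (start j) u := by
  rw [h.apply_eq u hu]
  split_ifs with hj
  · simp only [hj, iff_true]
    intro hc
    exact h.ne_zero j (by linarith)
  · simp [hj]

theorem filter_ne_subset_iff [Fintype ι] (h : IsHalfArcFamily t g B y start) {u v : ℕ}
    (hu : u < 2 * t) (hv : v < 2 * t) :
    (univ.filter fun e => B e ≠ y v e) ⊆ (univ.filter fun e => B e ≠ y u e)
      ↔ ∀ s < 2 * t, g s → inArc t s v → inArc t s u := by
  simp only [subset_iff, mem_filter, mem_univ, true_and, h.ne_iff_inArc hu, h.ne_iff_inArc hv]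
  constructor
  · intro hsub s hs hgs
    obtain ⟨j, rfl⟩ := h.exists_start s hs hgs
    exact @hsub j
  · intro hsub j
    exact hsub _ (h.start_lt j) (h.start_mem j)

theorem injOn (h : IsHalfArcFamily t g B y start) : Set.InjOn y (range (2 * t)) := by
  intro u hu v hv huv
  rw [coe_range, Set.mem_Iio] at hu hv
  refine eq_of_forall_inArc_iff h.antiperiodic hv hu fun s hs hgs => ?_
  obtain ⟨j, rfl⟩ := h.exists_start s hs hgs
  rw [← h.ne_iff_inArc hu, ← h.ne_iff_inArc hv, huv]

theorem sum_eq_iff (h : IsHalfArcFamily t g B y start) {P : Finset ℕ} (hP : P ⊆ range (2 * t)) :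
    (∑ u ∈ P, y u) = B ↔ ∀ s < 2 * t, g s → 2 * #(P.filter (inArc t s)) + 1 = #P := by
  have hsum : ∑ u ∈ P, y u = ∑ u ∈ P, fun j => if inArc t (start j) u then -B j else B j :=
    sum_congr rfl fun u hu => funext (h.apply_eq u (mem_range.1 (hP hu)))
  rw [hsum, sum_ite_neg_eq_iff h.ne_zero]
  constructor
  · intro hcard s hs hgs
    obtain ⟨j, rfl⟩ := h.exists_start s hs hgs
    exact hcard j
  · intro hcard j
    exact hcard _ (h.start_lt j) (h.start_mem j)

variable [Fintype ι] [DecidableEq ι] [DecidablePred g]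

theorem ascents_subset_range : ascents g 0 (2 * t) ⊆ range (2 * t) :=
  fun _ hi => mem_range.2 (mem_ascents.1 hi).1.2

theorem filter_minimal_eq (h : IsHalfArcFamily t g B y start) {V : Finset (ι → ℝ)}
    (hV : V = (range (2 * t)).image y) :
    V.filter (fun O => ∀ P ∈ V,
      (univ.filter fun e => B e ≠ P e) ⊆ (univ.filter fun e => B e ≠ O e) → P = O)
      = (ascents g 0 (2 * t)).image y := by
  subst hV
  ext O
  simp only [mem_filter, mem_image, mem_range, forall_exists_index, and_imp,
    forall_apply_eq_imp_iff₂]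
  constructor
  · rintro ⟨⟨u, hu, rfl⟩, hmin⟩
    refine ⟨u, ?_, rfl⟩
    by_contra hasc
    obtain ⟨v, hv, hne, hsub⟩ := exists_ne_of_notMem_ascents h.antiperiodic hu hasc
    exact hne (h.injOn (mem_range.2 hv) (mem_range.2 hu)
      (hmin v hv ((h.filter_ne_subset_iff hu hv).2 hsub)))
  · rintro ⟨u, hasc, rfl⟩
    have hu := (mem_ascents.1 hasc).1.2
    refine ⟨⟨u, hu, rfl⟩, fun v hv hsub => ?_⟩
    rw [eq_of_mem_ascents h.antiperiodic hasc hv ((h.filter_ne_subset_iff hu hv).1 hsub)]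

theorem sum_minimal_eq_and_minimal_subset (h : IsHalfArcFamily t g B y start)
    {V minV : Finset (ι → ℝ)} (hV : V = (range (2 * t)).image y)
    (hmin : minV = V.filter fun O => ∀ P ∈ V,
      (univ.filter fun e => B e ≠ P e) ⊆ (univ.filter fun e => B e ≠ O e) → P = O) :
    (∑ q ∈ minV, q) = B ∧ ∀ S ⊆ V, (∑ q ∈ S, q) = B → minV ⊆ S := by
  rw [hmin, h.filter_minimal_eq hV]
  subst hV
  refine ⟨?_, fun S hS hSB => ?_⟩
  · rw [sum_image (h.injOn.mono (coe_subset.2 ascents_subset_range))]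
    exact (h.sum_eq_iff ascents_subset_range).2 fun s hs hgs =>
      two_mul_card_filter_inArc_add_one h.antiperiodic hs hgs
  · set P := (range (2 * t)).filter fun u => y u ∈ S
    have hPS : P.image y = S := by
      ext q
      simp only [P, mem_image, mem_filter]
      constructor
      · rintro ⟨u, ⟨-, hq⟩, rfl⟩
        exact hq
      · intro hq
        obtain ⟨u, hu, rfl⟩ := mem_image.1 (hS hq)
        exact ⟨u, ⟨hu, hq⟩, rfl⟩
    have hPB : ∑ u ∈ P, y u = B := by
      rwa [← hPS, sum_image (h.injOn.mono (coe_subset.2 (filter_subset _ _)))] at hSB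
    rw [← hPS]
    exact image_subset_image (ascents_subset h.antiperiodic (filter_subset _ _)
      ((h.sum_eq_iff (filter_subset _ _)).1 hPB))

end IsHalfArcFamily

def antiperiodicExt (t : ℕ) (c : ℕ → Prop) (m : ℕ) : Prop := Even (m / t) ↔ c (m % t)

theorem antiperiodicExt_add {t : ℕ} (ht : 0 < t) (c : ℕ → Prop) (m : ℕ) :
    antiperiodicExt t c (m + t) ↔ ¬ antiperiodicExt t c m := by
  rw [antiperiodicExt, antiperiodicExt, Nat.add_div_right m ht, Nat.add_mod_right,
    Nat.even_add_one]
  tauto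

theorem antiperiodicExt_of_lt {t : ℕ} (c : ℕ → Prop) {m : ℕ} (hm : m < t) :
    antiperiodicExt t c m ↔ c m := by
  rw [antiperiodicExt, Nat.div_eq_of_lt hm, Nat.mod_eq_of_lt hm]
  simp

theorem eq_neg_of_ne_of_sign {a b : ℝ} (ha : a = -1 ∨ a = 1) (hb : b = -1 ∨ b = 1)
    (hne : a ≠ b) : b = -a := by
  rcases ha with rfl | rfl <;> rcases hb with rfl | rfl <;> norm_num at *

/-- The vertex `R u` of a symmetric cycle starting at `r` whose step `k` flips the coordinate `j`
with `σ j = k`. -/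
def cycleVertex (t : ℕ) (σ : Fin t → ℕ) (r : Fin t → ℝ) (u : ℕ) (j : Fin t) : ℝ :=
  if σ j < u ∧ u ≤ σ j + t then -r j else r j

theorem eq_cycleVertex {t : ℕ} {R : Fin (t + 1) → Fin t → ℝ}
    (hsign : ∀ k j, R k j = -1 ∨ R k j = 1) (l : Fin t ≃ Fin t)
    (hstep : ∀ k j, R k.castSucc j ≠ R k.succ j ↔ j = l k) (k : Fin (t + 1)) :
    R k = cycleVertex t (fun j => l.symm j) (R 0) k := by
  induction k using Fin.induction with
  | zero => funext j; simp [cycleVertex]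
  | succ k ih =>
    funext j
    have hk := congrFun ih j
    simp only [cycleVertex, Fin.val_castSucc] at hk
    simp only [cycleVertex, Fin.val_succ]
    by_cases hj : j = l k
    · have hflip := eq_neg_of_ne_of_sign (hsign _ j) (hsign _ j) ((hstep k j).2 hj)
      subst hj
      simp only [Equiv.symm_apply_apply] at hk ⊢
      rw [hflip, hk, if_neg (by omega), if_pos (by omega)]
    · have hsame : R k.succ j = R k.castSucc j :=
        not_not.1 fun h => hj ((hstep k j).1 (Ne.symm h))
      have hσ : (l.symm j : ℕ) ≠ k := fun h => hj (by rw [← Fin.ext h, Equiv.apply_symm_apply])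
      rw [hsame, hk]
      exact if_congr (by omega) rfl rfl

section CycleVertex

variable {t : ℕ} {σ : Fin t → ℕ}

theorem cycleVertex_add_self (hσ : ∀ j, σ j < t) (r : Fin t → ℝ) {k : ℕ} (hk : k ≤ t) :
    cycleVertex t σ r (k + t) = -cycleVertex t σ r k := by
  funext j
  have := hσ j
  simp only [cycleVertex, Pi.neg_apply]
  split_ifs <;> first | rfl | omega | simp

theorem cycleVertex_two_mul (hσ : ∀ j, σ j < t) (r : Fin t → ℝ) :
    cycleVertex t σ r (2 * t) = cycleVertex t σ r 0 := by
  funext j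
  have := hσ j
  simp only [cycleVertex]
  split_ifs <;> first | rfl | omega

theorem image_cycleVertex (hσ : ∀ j, σ j < t) (r : Fin t → ℝ) :
    (univ.image fun k : Fin t => cycleVertex t σ r k)
        ∪ (univ.image fun k : Fin t => -cycleVertex t σ r k)
      = (range (2 * t)).image fun u => cycleVertex t σ r (u + 1) := by
  ext q
  simp only [mem_union, mem_image, mem_univ, true_and, mem_range]
  constructor
  · rintro (⟨k, rfl⟩ | ⟨k, rfl⟩)
    · by_cases hk : (k : ℕ) = 0
      · refine ⟨2 * t - 1, by omega, ?_⟩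
        rw [Nat.sub_add_cancel (by omega), cycleVertex_two_mul hσ, hk]
      · exact ⟨k - 1, by omega, by rw [Nat.sub_add_cancel (by omega)]⟩
    · refine ⟨k + t - 1, by omega, ?_⟩
      rw [Nat.sub_add_cancel (by omega), cycleVertex_add_self hσ r k.isLt.le]
  · rintro ⟨u, hu, rfl⟩
    by_cases h1 : u + 1 < t
    · exact Or.inl ⟨⟨u + 1, h1⟩, rfl⟩
    by_cases h2 : u + 1 < 2 * t
    · refine Or.inr ⟨⟨u + 1 - t, by omega⟩, ?_⟩
      rw [Fin.val_mk, ← cycleVertex_add_self hσ r (by omega), Nat.sub_add_cancel (by omega)]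
    · refine Or.inl ⟨⟨0, by omega⟩, ?_⟩
      rw [show u + 1 = 2 * t by omega, cycleVertex_two_mul hσ]

end CycleVertex

-- Position `u` carries the vertex `R (u + 1)`, so that the minimal vertices sit at the ascents.
theorem isHalfArcFamily_cycleVertex {t : ℕ} (ht : 0 < t) (l : Fin t ≃ Fin t) {r B : Fin t → ℝ}
    (hr : ∀ j, r j = -1 ∨ r j = 1) (hB : ∀ j, B j = -1 ∨ B j = 1) :
    IsHalfArcFamily t (antiperiodicExt t fun p => ∃ j, (l.symm j : ℕ) = p ∧ B j = r j) B
      (fun u => cycleVertex t (fun j => l.symm j) r (u + 1))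
      (fun j => if B j = r j then l.symm j else l.symm j + t) where
  antiperiodic := antiperiodicExt_add ht _
  ne_zero j := by rcases hB j with h | h <;> rw [h] <;> norm_num
  start_lt j := by have := (l.symm j).isLt; split_ifs <;> omega
  start_mem j := by
    split_ifs with h
    · exact (antiperiodicExt_of_lt _ (l.symm j).isLt).2 ⟨j, rfl, h⟩
    · rw [antiperiodicExt_add ht, antiperiodicExt_of_lt _ (l.symm j).isLt]
      rintro ⟨j', hj', h'⟩
      rw [l.symm.injective (Fin.ext hj')] at h'
      exact h h'
  exists_start s hs hgs := by
    by_cases hst : s < t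
    · obtain ⟨j, hj, h⟩ := (antiperiodicExt_of_lt _ hst).1 hgs
      exact ⟨j, by rw [if_pos h, hj]⟩
    · obtain ⟨p, rfl⟩ : ∃ p, s = p + t := ⟨s - t, by omega⟩
      have hp : p < t := by omega
      rw [antiperiodicExt_add ht, antiperiodicExt_of_lt _ hp] at hgs
      refine ⟨l ⟨p, hp⟩, ?_⟩
      have hne : B (l ⟨p, hp⟩) ≠ r (l ⟨p, hp⟩) := fun h => hgs ⟨_, by simp, h⟩
      rw [if_neg hne, Equiv.symm_apply_apply]
  apply_eq u hu j := by
    have := (l.symm j).isLt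
    by_cases h : B j = r j
    · have hcond : inArc t (l.symm j) u ↔ (l.symm j : ℕ) < u + 1 ∧ u + 1 ≤ l.symm j + t := by
        unfold inArc; omega
      simp only [if_pos h]
      simp only [cycleVertex, hcond, h]
    · have hcond : inArc t (l.symm j + t) u
          ↔ ¬((l.symm j : ℕ) < u + 1 ∧ u + 1 ≤ l.symm j + t) := by
        unfold inArc; omega
      simp only [if_neg h]
      simp only [cycleVertex, hcond, ite_not, eq_neg_of_ne_of_sign (hr j) (hB j) (Ne.symm h),
        neg_neg]

theorem stmt_9_general (t : ℕ) (ht : 0 < t)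
    (R : Fin (t + 1) → Fin t → ℝ)
    (hsign : ∀ k j, R k j = -1 ∨ R k j = 1)
    (l : Fin t → Fin t) (hl : Function.Bijective l)
    (hstep : ∀ (k : Fin t) (j : Fin t), R k.castSucc j ≠ R k.succ j ↔ j = l k)
    (V : Finset (Fin t → ℝ))
    (hV : V = (Finset.univ.image fun k : Fin t => R k.castSucc)
        ∪ (Finset.univ.image fun k : Fin t => -(R k.castSucc)))
    (B : Fin t → ℝ) (hB : ∀ j, B j = -1 ∨ B j = 1)
    (minV : Finset (Fin t → ℝ))
    (hmin : minV = V.filter fun O => ∀ P ∈ V,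
      (Finset.univ.filter fun e => B e ≠ P e) ⊆ (Finset.univ.filter fun e => B e ≠ O e)
        → P = O) :
    (∑ q ∈ minV, q) = B ∧
    ∀ S : Finset (Fin t → ℝ), S ⊆ V → (∑ q ∈ S, q) = B → minV ⊆ S := by
  classical
  set e := Equiv.ofBijective l hl
  have hR : ∀ k : Fin t, R k.castSucc = cycleVertex t (fun j => e.symm j) (R 0) k := fun k =>
    eq_cycleVertex hsign e hstep k.castSucc
  simp only [hR] at hV
  rw [image_cycleVertex (fun j => (e.symm j).isLt)] at hV
  exact (isHalfArcFamily_cycleVertex ht e (hsign 0) hB).sum_minimal_eq_and_minimal_subset hV hmin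

theorem stmt_9 (t : ℕ) (ht : 0 < t)
    (R : Fin (t + 1) → Fin t → ℝ)
    (hsign : ∀ k j, R k j = -1 ∨ R k j = 1)
    (hRt : R (Fin.last t) = -(R 0))
    (l : Fin t → Fin t) (hl : Function.Bijective l)
    (hstep : ∀ (k : Fin t) (j : Fin t), R k.castSucc j ≠ R k.succ j ↔ j = l k)
    (V : Finset (Fin t → ℝ))
    (hV : V = (Finset.univ.image fun k : Fin t => R k.castSucc)
        ∪ (Finset.univ.image fun k : Fin t => -(R k.castSucc)))
    (B : Fin t → ℝ) (hB : ∀ j, B j = -1 ∨ B j = 1)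
    (minV : Finset (Fin t → ℝ))
    (hmin : minV = V.filter fun O => ∀ P ∈ V,
      (Finset.univ.filter fun e => B e ≠ P e) ⊆ (Finset.univ.filter fun e => B e ≠ O e)
        → P = O) :
    (∑ q ∈ minV, q) = B ∧
    ∀ S : Finset (Fin t → ℝ), S ⊆ V → (∑ q ∈ S, q) = B → minV ⊆ S :=
  stmt_9_general t ht R hsign l hl hstep V hV B hB minV hmin
end

section
/- With V(R) as above and x = T⁺·M^{-1} the coordinate vector of the all-ones vector T⁺ in the basis R^0,…,R^{t-1}, the number of nonzero entries of x is odd, and each vertex R^{i-1} with x_i = 1 together with each -R^{i-1} = R^{i-1+t} with x_i = -1 gives exactly |{i : x_i ≠ 0}| distinct elements of V(R) summing to T⁺; hence every {-1,1}-vector is a sum of an odd number of distinct vertices of any symmetric cycle's vertex set. -/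
open Finset Matrix

/-! Since `R^k` and `R^(k+1)` differ only in coordinate `l k`, `(R^k_(l k) / 2) • (R^k - R^(k+1))`
is the unit vector `e_(l k)`. Summing `T_(l k)` times these and folding `R^t = -R^0` back writes any
`T` as `∑ (a_k - a_(k-1)) • R^k` (with `a_(-1) := -a_(t-1)`) where `a_k = ±1/2`; so the rows
`R^0, …, R^(t-1)` span, hence form a basis, and for a sign vector `T` the coefficients lie in
`{-1, 0, 1}`. Linear independence makes the chosen vertices `±R^k` distinct, and reading the
identity in one coordinate exhibits `±1` as a sum of `|s|` terms `±1`, so `|s|` is odd. -/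

lemma single_eq_smul_sub_of_flip {ι : Type*} [DecidableEq ι] {u v : ι → ℝ} {j : ι}
    (hu : u j = -1 ∨ u j = 1) (hv : v j = -1 ∨ v j = 1) (h : ∀ i, u i ≠ v i ↔ i = j) :
    Pi.single j 1 = (u j / 2) • (u - v) := by
  ext i
  by_cases hij : i = j
  · subst hij
    have := (h i).2 rfl
    rcases hu with hu | hu <;> rcases hv with hv | hv <;> simp_all <;> norm_num
  · have : u i = v i := not_not.1 (mt (h i).1 hij)
    simp [hij, this]

lemma odd_card_of_sum_eq_one {ι : Type*} {s : Finset ι} {f : ι → ℝ}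
    (hf : ∀ i ∈ s, f i = 1 ∨ f i = -1) (hsum : ∑ i ∈ s, f i = 1) : Odd s.card := by
  classical
  have key : (s.card : ℝ) - 1 = 2 * #{i ∈ s | f i = -1} := by
    calc (s.card : ℝ) - 1 = ∑ i ∈ s, (1 - f i) := by simp [Finset.sum_sub_distrib, hsum]
      _ = ∑ i ∈ s, if f i = -1 then 2 else 0 :=
        Finset.sum_congr rfl fun i hi => by rcases hf i hi with h | h <;> norm_num [h]
      _ = 2 * #{i ∈ s | f i = -1} := by rw [← Finset.sum_filter]; simp [mul_comm]
  refine ⟨#{i ∈ s | f i = -1}, ?_⟩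
  exact_mod_cast (by linarith : (s.card : ℝ) = 2 * #{i ∈ s | f i = -1} + 1)

lemma LinearIndependent.injOn_smul {K V ι : Type*} [DivisionRing K] [AddCommGroup V]
    [Module K V] {v : ι → V} (hv : LinearIndependent K v) (c : ι → K) :
    Set.InjOn (fun i => c i • v i) {i | c i ≠ 0} := by
  classical
  intro i hi j _ hij
  by_contra hne
  have := linearIndependent_iff'.1 hv {i, j} (fun k => if k = i then c i else -c j)
    (by simp [Finset.sum_pair hne, Ne.symm hne, hij]) i (by simp)
  exact hi (by simpa using this)

lemma sum_smul_succ_of_antiperiodic {K E : Type*} [Ring K] [AddCommGroup E] [Module K E]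
    {n : ℕ} {v : Fin (n + 1 + 1) → E} (hv : v (Fin.last (n + 1)) = -v 0)
    (a : Fin (n + 1) → K) :
    ∑ k, a k • v k.succ =
      ∑ k, (Fin.cons (-a (Fin.last n)) (Fin.init a) : Fin (n + 1) → K) k • v k.castSucc := by
  rw [Fin.sum_univ_castSucc, Fin.sum_univ_succ]
  simp [Fin.init, hv, add_comm]

structure IsSymmetricCycle {t : ℕ} (R : Fin (t + 1) → Fin t → ℝ) (l : Fin t → Fin t) :
    Prop where
  sign : ∀ k j, R k j = -1 ∨ R k j = 1
  last_eq_neg : R (Fin.last t) = -R 0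
  bijective : Function.Bijective l
  step : ∀ k j, R k.castSucc j ≠ R k.succ j ↔ j = l k

noncomputable def vertices {t : ℕ} (R : Fin (t + 1) → Fin t → ℝ) : Finset (Fin t → ℝ) :=
  (univ.image fun k : Fin t => R k.castSucc) ∪ (univ.image fun k : Fin t => -R k.castSucc)

lemma image_smul_subset_vertices {t : ℕ} {R : Fin (t + 1) → Fin t → ℝ} {y : Fin t → ℝ}
    (hy : ∀ i, y i = 0 ∨ y i = 1 ∨ y i = -1) :
    (({i | y i ≠ 0} : Finset _).image fun i => y i • R i.castSucc) ⊆ vertices R := by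
  intro q hq
  obtain ⟨i, hi, rfl⟩ := mem_image.1 hq
  rcases hy i with h | h | h
  · exact absurd h (mem_filter.1 hi).2
  · exact mem_union_left _ (mem_image.2 ⟨i, mem_univ _, by simp [h]⟩)
  · exact mem_union_right _ (mem_image.2 ⟨i, mem_univ _, by simp [h]⟩)

namespace IsSymmetricCycle

variable {n : ℕ} {R : Fin (n + 1 + 1) → Fin (n + 1) → ℝ} {l : Fin (n + 1) → Fin (n + 1)}

lemma sum_smul_sub_succ (hR : IsSymmetricCycle R l) (T : Fin (n + 1) → ℝ) :
    ∑ k, (T (l k) * R k.castSucc (l k) / 2) • (R k.castSucc - R k.succ) = T := by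
  calc ∑ k, (T (l k) * R k.castSucc (l k) / 2) • (R k.castSucc - R k.succ)
      = ∑ k, Pi.single (l k) (T (l k)) := by
        refine sum_congr rfl fun k _ => ?_
        rw [mul_div_assoc, mul_smul,
          ← single_eq_smul_sub_of_flip (hR.sign _ _) (hR.sign _ _) (hR.step k)]
        simp [← Pi.single_smul]
    _ = ∑ j, Pi.single j (T j) := hR.bijective.sum_comp fun j => Pi.single j (T j)
    _ = T := univ_sum_single T

lemma mem_span_rows (hR : IsSymmetricCycle R l) (m : Fin (n + 1 + 1)) :
    R m ∈ Submodule.span ℝ (Set.range fun i : Fin (n + 1) => R i.castSucc) := by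
  rcases Fin.eq_castSucc_or_eq_last m with ⟨i, rfl⟩ | rfl
  · exact Submodule.subset_span ⟨i, rfl⟩
  · rw [hR.last_eq_neg]
    exact neg_mem (Submodule.subset_span ⟨0, rfl⟩)

lemma isUnit_rows (hR : IsSymmetricCycle R l) :
    IsUnit (Matrix.of fun i j : Fin (n + 1) => R i.castSucc j) := by
  rw [← vecMul_surjective_iff_isUnit]
  intro T
  change T ∈ LinearMap.range (Matrix.of fun i j : Fin (n + 1) => R i.castSucc j).vecMulLinear
  rw [range_vecMulLinear, ← hR.sum_smul_sub_succ T]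
  exact sum_mem fun k _ =>
    Submodule.smul_mem _ _ (sub_mem (hR.mem_span_rows _) (hR.mem_span_rows _))

lemma exists_sign_coeffs (hR : IsSymmetricCycle R l) {T : Fin (n + 1) → ℝ}
    (hT : ∀ j, T j = -1 ∨ T j = 1) :
    ∃ y : Fin (n + 1) → ℝ,
      (∀ i, y i = 0 ∨ y i = 1 ∨ y i = -1) ∧ ∑ i, y i • R i.castSucc = T := by
  set a : Fin (n + 1) → ℝ := fun k => T (l k) * R k.castSucc (l k) / 2
  set b : Fin (n + 1) → ℝ := Fin.cons (-a (Fin.last n)) (Fin.init a)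
  have ha : ∀ k, a k = 1 / 2 ∨ a k = -(1 / 2) := fun k => by
    rcases hT (l k) with h | h <;> rcases hR.sign k.castSucc (l k) with h' | h' <;>
      norm_num [a, h, h']
  have hb : ∀ k, b k = 1 / 2 ∨ b k = -(1 / 2) := fun k => by
    refine Fin.cases ?_ (fun k => ha k.castSucc) k
    rcases ha (Fin.last n) with h | h <;> simp [b, h]
  refine ⟨a - b, fun i => ?_, ?_⟩
  · rcases ha i with h | h <;> rcases hb i with h' | h' <;> norm_num [h, h']
  · calc ∑ i, (a - b) i • R i.castSucc
        = ∑ k, a k • R k.castSucc - ∑ k, a k • R k.succ := by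
          rw [sum_smul_succ_of_antiperiodic hR.last_eq_neg]
          simp [sub_smul, b]
      _ = T := by simpa [smul_sub] using hR.sum_smul_sub_succ T

lemma eq_vecMul_inv (hR : IsSymmetricCycle R l) {y T : Fin (n + 1) → ℝ}
    (hyR : ∑ i, y i • R i.castSucc = T) :
    y = T ᵥ* (Matrix.of fun i j : Fin (n + 1) => R i.castSucc j)⁻¹ := by
  have hyM : y ᵥ* (Matrix.of fun i j : Fin (n + 1) => R i.castSucc j) = T := by
    rw [vecMul_eq_sum]
    exact hyR
  rw [← hyM, vecMul_vecMul,
    mul_nonsing_inv _ ((Matrix.isUnit_iff_isUnit_det _).1 hR.isUnit_rows), vecMul_one]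

lemma injOn_smul_rows (hR : IsSymmetricCycle R l) (y : Fin (n + 1) → ℝ) :
    Set.InjOn (fun i => y i • R i.castSucc) ({i | y i ≠ 0} : Finset (Fin (n + 1))) :=
  ((linearIndependent_rows_iff_isUnit.2 hR.isUnit_rows).injOn_smul y).mono
    fun _ hi => (mem_filter.1 hi).2

lemma card_image_support (hR : IsSymmetricCycle R l) (y : Fin (n + 1) → ℝ) :
    (({i | y i ≠ 0} : Finset _).image fun i => y i • R i.castSucc).card = #{i | y i ≠ 0} :=
  card_image_of_injOn (hR.injOn_smul_rows y)

lemma sum_image_support (hR : IsSymmetricCycle R l) {y T : Fin (n + 1) → ℝ}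
    (hyR : ∑ i, y i • R i.castSucc = T) :
    ∑ q ∈ ({i | y i ≠ 0} : Finset _).image (fun i => y i • R i.castSucc), q = T := by
  rw [sum_image (hR.injOn_smul_rows y),
    sum_filter_of_ne (p := fun i => y i ≠ 0) fun i _ h hyi => h (by rw [hyi, zero_smul]), hyR]

lemma odd_card_support (hR : IsSymmetricCycle R l) {y T : Fin (n + 1) → ℝ}
    (hT : ∀ j, T j = -1 ∨ T j = 1) (hy : ∀ i, y i = 0 ∨ y i = 1 ∨ y i = -1)
    (hyR : ∑ i, y i • R i.castSucc = T) : Odd #{i | y i ≠ 0} := by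
  refine odd_card_of_sum_eq_one (f := fun i => y i * R i.castSucc 0 * T 0) (fun i hi => ?_) ?_
  · rcases (hy i).resolve_left (mem_filter.1 hi).2 with h | h <;>
      rcases hR.sign i.castSucc 0 with h' | h' <;> rcases hT 0 with h'' | h'' <;>
      norm_num [h, h', h'']
  · have hT0 : ∑ i, y i * R i.castSucc 0 = T 0 := by simpa using congrFun hyR 0
    rw [sum_filter_of_ne (p := fun i => y i ≠ 0) fun i _ h hyi => h (by simp [hyi]),
      ← sum_mul, hT0]
    rcases hT 0 with h | h <;> norm_num [h]

end IsSymmetricCycle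

theorem stmt_14 (t : ℕ) (ht : 0 < t)
    (R : Fin (t + 1) → Fin t → ℝ)
    (hsign : ∀ k j, R k j = -1 ∨ R k j = 1)
    (hRt : R (Fin.last t) = -(R 0))
    (l : Fin t → Fin t) (hl : Function.Bijective l)
    (hstep : ∀ (k : Fin t) (j : Fin t), R k.castSucc j ≠ R k.succ j ↔ j = l k)
    (V : Finset (Fin t → ℝ))
    (hV : V = (Finset.univ.image fun k : Fin t => R k.castSucc)
        ∪ (Finset.univ.image fun k : Fin t => -(R k.castSucc)))
    (x : Fin t → ℝ)
    (hx : x = Matrix.vecMul (fun _ => (1 : ℝ))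
        (Matrix.of fun i j : Fin t => R i.castSucc j)⁻¹)
    (s : Finset (Fin t)) (hs : s = Finset.univ.filter fun i => x i ≠ 0)
    (Q : Finset (Fin t → ℝ)) (hQ : Q = s.image fun i => x i • R i.castSucc) :
    Odd s.card ∧ Q ⊆ V ∧ Q.card = s.card ∧ (∑ q ∈ Q, q) = (fun _ => (1 : ℝ)) ∧
    ∀ T : Fin t → ℝ, (∀ j, T j = -1 ∨ T j = 1) →
      ∃ S : Finset (Fin t → ℝ), S ⊆ V ∧ Odd S.card ∧ (∑ q ∈ S, q) = T := by
  obtain ⟨n, rfl⟩ : ∃ n, t = n + 1 := ⟨t - 1, by omega⟩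
  have hR : IsSymmetricCycle R l := ⟨hsign, hRt, hl, hstep⟩
  have hone : ∀ j : Fin (n + 1), (fun _ => (1 : ℝ)) j = -1 ∨ (fun _ => (1 : ℝ)) j = 1 :=
    fun _ => Or.inr rfl
  obtain ⟨y, hy, hyR⟩ := hR.exists_sign_coeffs hone
  have hxy : x = y := hx.trans (hR.eq_vecMul_inv hyR).symm
  subst hxy hV hs hQ
  refine ⟨hR.odd_card_support hone hy hyR, image_smul_subset_vertices hy,
    hR.card_image_support x, hR.sum_image_support hyR, fun T hT => ?_⟩
  obtain ⟨z, hz, hzR⟩ := hR.exists_sign_coeffs hT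
  exact ⟨_, image_smul_subset_vertices hz,
    (hR.card_image_support z).symm ▸ hR.odd_card_support hT hz hzR, hR.sum_image_support hzR⟩
end
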